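/- Let (f_x)_{x∈[a,b]} be a channel on [a,b] with ‖Ξ‖_L < ∞, let Λ : [a,b] × [a,b] → [0,∞) be a measurable loss function with Λ_max = sup Λ < ∞ and ‖Λ‖_L < ∞, and let g : ℝ → [a,b] be measurable. Then for all Borel probability measures P, P̂ on [a,b], | ∫_{[a,b]} ∫_ℝ Λ(x, g(y)) f_x(y) dy dP(x) − ∫_{[a,b]} ∫_ℝ Λ(x, g(y)) f_x(y) dy dP̂(x) | ≤ ( ‖Λ‖_L + Λ_max·‖Ξ‖_L + (b−a)·‖Λ‖_L·‖Ξ‖_L + Λ_max ) · β(P, P̂). -/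

import Mathlib

/-!
The expected loss `h(x) = ∫ Λ(x, g y) f_x(y) dy` is bounded by `Λ_max` and is Lipschitz on
`[a,b]` with constant `‖Λ‖_L + Λ_max ‖Ξ‖_L`, by the splitting
`Λ(x,·) f_x − Λ(x',·) f_{x'} = (Λ(x,·) − Λ(x',·)) f_x + Λ(x',·) (f_x − f_{x'})`.
Composed with the projection of `ℝ` onto `[a,b]` and divided by the sum of these two constants,
`h` becomes a test function in the definition of `β`; since `P` and `P̂` live on `[a,b]`, the
projection does not change the integrals.
-/

open MeasureTheory

/-- The continuity modulus of a channel: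
`ξ_Δ = sup { ∫ |f_x − f_{x'}| : x, x' ∈ [a,b], |x − x'| ≤ Δ }`. -/
noncomputable def channelMod (a b : ℝ) (F : ℝ → ℝ → ℝ) (Δ : ℝ) : ℝ :=
  sSup {r : ℝ | ∃ x ∈ Set.Icc a b, ∃ x' ∈ Set.Icc a b, |x - x'| ≤ Δ ∧
    r = ∫ y : ℝ, |F x y - F x' y|}

/-- The modulus of continuity of a loss function in its first argument. -/
noncomputable def lossMod (a b : ℝ) (Λ : ℝ → ℝ → ℝ) (Δ : ℝ) : ℝ :=
  sSup {r : ℝ | ∃ xhat ∈ Set.Icc a b, ∃ x ∈ Set.Icc a b, ∃ x' ∈ Set.Icc a b,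
    |x - x'| ≤ Δ ∧ r = |Λ x xhat - Λ x' xhat|}

/-- The Lipschitz norm `sup_{0<Δ<b−a} mod(Δ)/Δ` of a modulus of continuity. -/
noncomputable def lipNormOfMod (a b : ℝ) (mod : ℝ → ℝ) : ℝ :=
  sSup {r : ℝ | ∃ Δ : ℝ, 0 < Δ ∧ Δ < b - a ∧ r = mod Δ / Δ}

/-- The bounded-Lipschitz (Dudley) distance
`β(P,Q) = sup { |∫ f dP − ∫ f dQ| : Lip(f) + ‖f‖_∞ ≤ 1 }`. -/
noncomputable def betaDist {α : Type*} [MeasurableSpace α] [PseudoMetricSpace α]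
    (P Q : Measure α) : ℝ :=
  sSup {r : ℝ | ∃ f : α → ℝ, ∃ C D : NNReal, LipschitzWith C f ∧ (∀ z, |f z| ≤ D) ∧
    (C : ℝ) + (D : ℝ) ≤ 1 ∧ r = |(∫ z, f z ∂P) - ∫ z, f z ∂Q|}

open Set
open scoped NNReal

section BetaDist

variable {α : Type*} [MeasurableSpace α] [PseudoMetricSpace α] {μ ν : Measure α}
  [IsFiniteMeasure μ] [IsFiniteMeasure ν]

lemma bddAbove_betaDist_set :
    BddAbove {r : ℝ | ∃ f : α → ℝ, ∃ C D : ℝ≥0, LipschitzWith C f ∧ (∀ z, |f z| ≤ D) ∧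
      (C : ℝ) + (D : ℝ) ≤ 1 ∧ r = |(∫ z, f z ∂μ) - ∫ z, f z ∂ν|} := by
  refine ⟨μ.real univ + ν.real univ, ?_⟩
  rintro _ ⟨f, C, D, -, hfD, hCD, rfl⟩
  have hD : (D : ℝ) ≤ 1 := by linarith [C.coe_nonneg]
  have hint (ρ : Measure α) [IsFiniteMeasure ρ] : |∫ z, f z ∂ρ| ≤ ρ.real univ := by
    simpa only [Real.norm_eq_abs, one_mul] using
      norm_integral_le_of_norm_le_const (μ := ρ) (f := f) (ae_of_all _ fun z => (hfD z).trans hD)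
  exact (abs_sub _ _).trans (add_le_add (hint μ) (hint ν))

lemma betaDist_nonneg : 0 ≤ betaDist μ ν :=
  le_csSup bddAbove_betaDist_set ⟨0, 0, 0, LipschitzWith.const 0, by simp, by simp, by simp⟩

lemma abs_integral_sub_le_mul_betaDist {f : α → ℝ} {C D : ℝ≥0} (hf : LipschitzWith C f)
    (hfD : ∀ z, |f z| ≤ D) :
    |∫ z, f z ∂μ - ∫ z, f z ∂ν| ≤ (C + D) * betaDist μ ν := by
  rcases eq_or_ne (C + D) 0 with hCD | hCD
  · obtain ⟨rfl, rfl⟩ := add_eq_zero.1 hCD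
    have hf0 : ∀ z, f z = 0 := fun z => abs_nonpos_iff.1 (by simpa using hfD z)
    simp [hf0]
  have hpos : (0 : ℝ) < C + D := by rw [← NNReal.coe_add]; positivity
  have hnormalized : |∫ z, f z / (C + D) ∂μ - ∫ z, f z / (C + D) ∂ν| ≤ betaDist μ ν := by
    refine le_csSup bddAbove_betaDist_set
      ⟨fun z => f z / (C + D), C / (C + D), D / (C + D), ?_, fun z => ?_, ?_, rfl⟩
    · refine LipschitzWith.of_dist_le_mul fun x y => ?_
      rw [Real.dist_eq, ← _root_.sub_div, abs_div, abs_of_pos hpos, NNReal.coe_div,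
        NNReal.coe_add, div_mul_eq_mul_div]
      exact div_le_div_of_nonneg_right (hf.dist_le_mul x y) hpos.le
    · rw [abs_div, abs_of_pos hpos, NNReal.coe_div, NNReal.coe_add]
      exact div_le_div_of_nonneg_right (hfD z) hpos.le
    · rw [NNReal.coe_div, NNReal.coe_div, NNReal.coe_add, ← add_div]
      exact (div_self hpos.ne').le
  rwa [integral_div, integral_div, ← _root_.sub_div, abs_div, abs_of_pos hpos, div_le_iff₀ hpos,
    mul_comm] at hnormalized

end BetaDist

lemma abs_integral_sub_le_mul_betaDist_of_lipschitzOnWith_Icc {a b : ℝ} (hab : a ≤ b)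
    {μ ν : Measure ℝ} [IsFiniteMeasure μ] [IsFiniteMeasure ν]
    (hμ : μ (Icc a b)ᶜ = 0) (hν : ν (Icc a b)ᶜ = 0) {f : ℝ → ℝ} {C D : ℝ≥0}
    (hf : LipschitzOnWith C f (Icc a b)) (hfD : ∀ x ∈ Icc a b, |f x| ≤ D) :
    |∫ x, f x ∂μ - ∫ x, f x ∂ν| ≤ (C + D) * betaDist μ ν := by
  have hfext : LipschitzWith C (IccExtend hab ((Icc a b).domRestrict f)) := by
    have h := hf.to_restrict.comp (LipschitzWith.projIcc hab)
    rw [mul_one] at h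
    exact h
  have hintegral (ρ : Measure ℝ) (hρ : ρ (Icc a b)ᶜ = 0) :
      ∫ x, IccExtend hab ((Icc a b).domRestrict f) x ∂ρ = ∫ x, f x ∂ρ :=
    integral_congr_ae <| (ae_iff.2 hρ).mono fun x hx => IccExtend_of_mem hab _ hx
  rw [← hintegral μ hμ, ← hintegral ν hν]
  exact abs_integral_sub_le_mul_betaDist hfext fun x => hfD _ (projIcc a b hab x).2

section Modulus

variable {a b : ℝ}

lemma le_lipNormOfMod_mul {mod : ℝ → ℝ}
    (hmod : BddAbove {r : ℝ | ∃ Δ : ℝ, 0 < Δ ∧ Δ < b - a ∧ r = mod Δ / Δ})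
    {Δ : ℝ} (hΔ : 0 < Δ) (hΔb : Δ < b - a) :
    mod Δ ≤ lipNormOfMod a b mod * Δ :=
  (div_le_iff₀ hΔ).1 (le_csSup hmod ⟨Δ, hΔ, hΔb, rfl⟩)

/-- Pairs at distance exactly `b - a` are out of reach of `hd`: split them at the midpoint. -/
lemma le_mul_abs_sub_of_forall_lt {d : ℝ → ℝ → ℝ} {K : ℝ}
    (hd_self : ∀ x ∈ Icc a b, d x x = 0)
    (hd_triangle : ∀ x ∈ Icc a b, ∀ y ∈ Icc a b, ∀ z ∈ Icc a b, d x z ≤ d x y + d y z)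
    (hd : ∀ Δ, 0 < Δ → Δ < b - a →
      ∀ x ∈ Icc a b, ∀ x' ∈ Icc a b, |x - x'| ≤ Δ → d x x' ≤ K * Δ)
    {x x' : ℝ} (hx : x ∈ Icc a b) (hx' : x' ∈ Icc a b) :
    d x x' ≤ K * |x - x'| := by
  rcases eq_or_ne x x' with rfl | hne
  · simp [hd_self x hx]
  have hm : (x + x') / 2 ∈ Icc a b := ⟨by linarith [hx.1, hx'.1], by linarith [hx.2, hx'.2]⟩
  set m := (x + x') / 2
  have hhalf : 0 < |x - x'| / 2 := by have := abs_pos.2 (sub_ne_zero.2 hne); positivity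
  have hhalf_lt : |x - x'| / 2 < b - a := by
    have := Real.dist_le_of_mem_Icc hx hx'
    rw [Real.dist_eq] at this
    linarith
  have hxm : |x - m| ≤ |x - x'| / 2 := by
    rw [show x - m = (x - x') / 2 by ring, abs_div, abs_two]
  have hmx' : |m - x'| ≤ |x - x'| / 2 := by
    rw [show m - x' = (x - x') / 2 by ring, abs_div, abs_two]
  calc d x x' ≤ d x m + d m x' := hd_triangle x hx m hm x' hx'
    _ ≤ K * (|x - x'| / 2) + K * (|x - x'| / 2) :=
      add_le_add (hd _ hhalf hhalf_lt x hx m hm hxm) (hd _ hhalf hhalf_lt m hm x' hx' hmx')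
    _ = K * |x - x'| := by ring

lemma abs_sub_le_lossMod {Λ : ℝ → ℝ → ℝ} {M : ℝ}
    (hΛ : ∀ x ∈ Icc a b, ∀ t ∈ Icc a b, |Λ x t| ≤ M)
    {Δ x x' t : ℝ} (hx : x ∈ Icc a b) (hx' : x' ∈ Icc a b) (ht : t ∈ Icc a b)
    (hxx' : |x - x'| ≤ Δ) :
    |Λ x t - Λ x' t| ≤ lossMod a b Λ Δ := by
  refine le_csSup ⟨M + M, ?_⟩ ⟨t, ht, x, hx, x', hx', hxx', rfl⟩
  rintro _ ⟨t, ht, x, hx, x', hx', -, rfl⟩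
  exact (abs_sub _ _).trans (add_le_add (hΛ x hx t ht) (hΛ x' hx' t ht))

lemma abs_sub_le_lipNormOfMod_lossMod_mul {Λ : ℝ → ℝ → ℝ} {M : ℝ}
    (hΛ : ∀ x ∈ Icc a b, ∀ t ∈ Icc a b, |Λ x t| ≤ M)
    (hΛmod : BddAbove {r : ℝ | ∃ Δ : ℝ, 0 < Δ ∧ Δ < b - a ∧ r = lossMod a b Λ Δ / Δ})
    {x x' t : ℝ} (hx : x ∈ Icc a b) (hx' : x' ∈ Icc a b) (ht : t ∈ Icc a b) :
    |Λ x t - Λ x' t| ≤ lipNormOfMod a b (lossMod a b Λ) * |x - x'| :=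
  le_mul_abs_sub_of_forall_lt (d := fun x x' => |Λ x t - Λ x' t|) (fun _ _ => by simp)
    (fun _ _ _ _ _ _ => abs_sub_le _ _ _)
    (fun _ hΔ hΔb _ hx _ hx' hxx' =>
      (abs_sub_le_lossMod hΛ hx hx' ht hxx').trans (le_lipNormOfMod_mul hΛmod hΔ hΔb))
    hx hx'

lemma integral_abs_sub_le_two {α : Type*} [MeasurableSpace α] {μ : Measure α} {f g : α → ℝ}
    (hf : ∀ y, 0 ≤ f y) (hg : ∀ y, 0 ≤ g y) (hf_one : ∫ y, f y ∂μ = 1) (hg_one : ∫ y, g y ∂μ = 1) :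
    ∫ y, |f y - g y| ∂μ ≤ 2 := by
  have hfi : Integrable f μ := .of_integral_ne_zero (by simp [hf_one])
  have hgi : Integrable g μ := .of_integral_ne_zero (by simp [hg_one])
  calc ∫ y, |f y - g y| ∂μ ≤ ∫ y, (f y + g y) ∂μ :=
        integral_mono (hfi.sub hgi).abs (hfi.add hgi)
          fun y => abs_sub_le_iff.2 ⟨by linarith [hg y], by linarith [hf y]⟩
    _ = 2 := by rw [integral_add hfi hgi, hf_one, hg_one]; norm_num

end Modulus

section Channel

variable {a b : ℝ} {F : ℝ → ℝ → ℝ}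

lemma integral_abs_sub_le_channelMod (hFnn : ∀ x ∈ Icc a b, ∀ y, 0 ≤ F x y)
    (hFprob : ∀ x ∈ Icc a b, ∫ y, F x y = 1)
    {Δ x x' : ℝ} (hx : x ∈ Icc a b) (hx' : x' ∈ Icc a b) (hxx' : |x - x'| ≤ Δ) :
    ∫ y, |F x y - F x' y| ≤ channelMod a b F Δ := by
  refine le_csSup ⟨2, ?_⟩ ⟨x, hx, x', hx', hxx', rfl⟩
  rintro _ ⟨x, hx, x', hx', -, rfl⟩
  exact integral_abs_sub_le_two (hFnn x hx) (hFnn x' hx') (hFprob x hx) (hFprob x' hx')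

lemma integral_abs_sub_le_lipNormOfMod_channelMod_mul (hFnn : ∀ x ∈ Icc a b, ∀ y, 0 ≤ F x y)
    (hFprob : ∀ x ∈ Icc a b, ∫ y, F x y = 1)
    (hFmod : BddAbove {r : ℝ | ∃ Δ : ℝ, 0 < Δ ∧ Δ < b - a ∧ r = channelMod a b F Δ / Δ})
    {x x' : ℝ} (hx : x ∈ Icc a b) (hx' : x' ∈ Icc a b) :
    ∫ y, |F x y - F x' y| ≤ lipNormOfMod a b (channelMod a b F) * |x - x'| := by
  have hFint : ∀ x ∈ Icc a b, Integrable (F x) := fun x hx =>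
    .of_integral_ne_zero (by simp [hFprob x hx])
  refine le_mul_abs_sub_of_forall_lt (d := fun x x' => ∫ y, |F x y - F x' y|)
    (fun _ _ => by simp) (fun x hx z hz x' hx' => ?_)
    (fun _ hΔ hΔb _ hx _ hx' hxx' => (integral_abs_sub_le_channelMod hFnn hFprob hx hx' hxx').trans
      (le_lipNormOfMod_mul hFmod hΔ hΔb))
    hx hx'
  have hxz := ((hFint x hx).sub (hFint z hz)).abs
  have hzx' := ((hFint z hz).sub (hFint x' hx')).abs
  calc ∫ y, |F x y - F x' y| ≤ ∫ y, (|F x y - F z y| + |F z y - F x' y|) :=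
        integral_mono ((hFint x hx).sub (hFint x' hx')).abs (hxz.add hzx')
          fun y => abs_sub_le _ _ _
    _ = _ := integral_add hxz hzx'

end Channel

noncomputable def expectedLoss (Λ F : ℝ → ℝ → ℝ) (g : ℝ → ℝ) (x : ℝ) : ℝ :=
  ∫ y, Λ x (g y) * F x y

section ExpectedLoss

variable {a b M : ℝ} {Λ F : ℝ → ℝ → ℝ} {g : ℝ → ℝ}

lemma abs_expectedLoss_le (hgr : ∀ y, g y ∈ Icc a b)
    (hΛ : ∀ x ∈ Icc a b, ∀ t ∈ Icc a b, |Λ x t| ≤ M)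
    (hFnn : ∀ x ∈ Icc a b, ∀ y, 0 ≤ F x y) (hFprob : ∀ x ∈ Icc a b, ∫ y, F x y = 1)
    {x : ℝ} (hx : x ∈ Icc a b) :
    |expectedLoss Λ F g x| ≤ M := by
  have hFint : Integrable (F x) := .of_integral_ne_zero (by simp [hFprob x hx])
  calc |expectedLoss Λ F g x| ≤ ∫ y, M * F x y := by
        rw [expectedLoss, ← Real.norm_eq_abs]
        refine norm_integral_le_of_norm_le (hFint.const_mul M) (ae_of_all _ fun y => ?_)
        rw [Real.norm_eq_abs, abs_mul, abs_of_nonneg (hFnn x hx y)]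
        exact mul_le_mul_of_nonneg_right (hΛ x hx _ (hgr y)) (hFnn x hx y)
    _ = M := by rw [integral_const_mul, hFprob x hx, mul_one]

lemma abs_expectedLoss_sub_le {L X : ℝ} (hΛmeas : Measurable (Function.uncurry Λ))
    (hgmeas : Measurable g) (hgr : ∀ y, g y ∈ Icc a b)
    (hΛ : ∀ x ∈ Icc a b, ∀ t ∈ Icc a b, |Λ x t| ≤ M)
    (hΛLip : ∀ x ∈ Icc a b, ∀ x' ∈ Icc a b, ∀ t ∈ Icc a b, |Λ x t - Λ x' t| ≤ L * |x - x'|)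
    (hFnn : ∀ x ∈ Icc a b, ∀ y, 0 ≤ F x y) (hFprob : ∀ x ∈ Icc a b, ∫ y, F x y = 1)
    (hFLip : ∀ x ∈ Icc a b, ∀ x' ∈ Icc a b, ∫ y, |F x y - F x' y| ≤ X * |x - x'|)
    {x x' : ℝ} (hx : x ∈ Icc a b) (hx' : x' ∈ Icc a b) :
    |expectedLoss Λ F g x - expectedLoss Λ F g x'| ≤ (L + M * X) * |x - x'| := by
  have hFint : ∀ z ∈ Icc a b, Integrable (F z) := fun z hz =>
    .of_integral_ne_zero (by simp [hFprob z hz])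
  have hint : ∀ z ∈ Icc a b, Integrable (fun y => Λ z (g y) * F z y) := fun z hz =>
    (hFint z hz).bdd_mul (hΛmeas.comp (measurable_const.prodMk hgmeas)).aestronglyMeasurable
      (ae_of_all _ fun y => hΛ z hz _ (hgr y))
  have hM : 0 ≤ M := (abs_nonneg _).trans (hΛ x hx _ (hgr 0))
  have hdiff : Integrable (fun y => |F x y - F x' y|) := ((hFint x hx).sub (hFint x' hx')).abs
  have hpointwise (y : ℝ) : |Λ x (g y) * F x y - Λ x' (g y) * F x' y|
      ≤ L * |x - x'| * F x y + M * |F x y - F x' y| := by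
    rw [show Λ x (g y) * F x y - Λ x' (g y) * F x' y
      = (Λ x (g y) - Λ x' (g y)) * F x y + Λ x' (g y) * (F x y - F x' y) by ring]
    refine (abs_add_le _ _).trans (add_le_add ?_ ?_) <;> rw [abs_mul]
    · rw [abs_of_nonneg (hFnn x hx y)]
      exact mul_le_mul_of_nonneg_right (hΛLip x hx x' hx' _ (hgr y)) (hFnn x hx y)
    · exact mul_le_mul_of_nonneg_right (hΛ x' hx' _ (hgr y)) (abs_nonneg _)
  calc |expectedLoss Λ F g x - expectedLoss Λ F g x'|
      = |∫ y, (Λ x (g y) * F x y - Λ x' (g y) * F x' y)| := by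
        rw [expectedLoss, expectedLoss, integral_sub (hint x hx) (hint x' hx')]
    _ ≤ ∫ y, |Λ x (g y) * F x y - Λ x' (g y) * F x' y| := abs_integral_le_integral_abs
    _ ≤ ∫ y, (L * |x - x'| * F x y + M * |F x y - F x' y|) :=
        integral_mono ((hint x hx).sub (hint x' hx')).abs
          (((hFint x hx).const_mul _).add (hdiff.const_mul _)) hpointwise
    _ = L * |x - x'| + M * ∫ y, |F x y - F x' y| := by
        rw [integral_add ((hFint x hx).const_mul _) (hdiff.const_mul _), integral_const_mul,
          integral_const_mul, hFprob x hx, mul_one]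
    _ ≤ L * |x - x'| + M * (X * |x - x'|) := by gcongr; exact hFLip x hx x' hx'
    _ = (L + M * X) * |x - x'| := by ring

end ExpectedLoss

theorem expected_loss_beta_continuity_general
    (a b : ℝ) (hab : a < b)
    -- the channel
    (F : ℝ → ℝ → ℝ)
    (hFnn : ∀ x ∈ Set.Icc a b, ∀ y : ℝ, 0 ≤ F x y)
    (hFprob : ∀ x ∈ Set.Icc a b, ∫ y : ℝ, F x y = 1)
    -- finiteness of the channel Lipschitz norm `‖Ξ‖_L`
    (hXiFin : BddAbove {r : ℝ | ∃ Δ : ℝ, 0 < Δ ∧ Δ < b - a ∧ r = channelMod a b F Δ / Δ})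
    -- the loss function, its supremum, and finiteness of its Lipschitz norm `‖Λ‖_L`
    (Λ : ℝ → ℝ → ℝ) (hΛmeas : Measurable (Function.uncurry Λ))
    (hΛnn : ∀ x ∈ Set.Icc a b, ∀ x' ∈ Set.Icc a b, 0 ≤ Λ x x')
    (Λmax : ℝ)
    (hΛmax : IsLUB (Set.image2 Λ (Set.Icc a b) (Set.Icc a b)) Λmax)
    (hΛFin : BddAbove {r : ℝ | ∃ Δ : ℝ, 0 < Δ ∧ Δ < b - a ∧ r = lossMod a b Λ Δ / Δ})
    -- the denoising rule
    (g : ℝ → ℝ) (hgmeas : Measurable g) (hgr : ∀ y : ℝ, g y ∈ Set.Icc a b)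
    -- the two input distributions
    (P Phat : Measure ℝ) [IsProbabilityMeasure P] [IsProbabilityMeasure Phat]
    (hPsupp : P (Set.Icc a b)ᶜ = 0) (hPhatsupp : Phat (Set.Icc a b)ᶜ = 0) :
    |(∫ x, (∫ y : ℝ, Λ x (g y) * F x y) ∂P)
        - ∫ x, (∫ y : ℝ, Λ x (g y) * F x y) ∂Phat|
      ≤ (lipNormOfMod a b (lossMod a b Λ)
          + Λmax * lipNormOfMod a b (channelMod a b F)
          + (b - a) * lipNormOfMod a b (lossMod a b Λ)
              * lipNormOfMod a b (channelMod a b F)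
          + Λmax) * betaDist P Phat := by
  have ha : a ∈ Icc a b := left_mem_Icc.2 hab.le
  have hb : b ∈ Icc a b := right_mem_Icc.2 hab.le
  have hΛ : ∀ x ∈ Icc a b, ∀ t ∈ Icc a b, |Λ x t| ≤ Λmax := fun x hx t ht =>
    (abs_of_nonneg (hΛnn x hx t ht)).trans_le (hΛmax.1 (mem_image2_of_mem hx ht))
  set L := lipNormOfMod a b (lossMod a b Λ)
  set X := lipNormOfMod a b (channelMod a b F)
  have hΛLip (x) (hx : x ∈ Icc a b) (x') (hx' : x' ∈ Icc a b) (t) (ht : t ∈ Icc a b) :=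
    abs_sub_le_lipNormOfMod_lossMod_mul hΛ hΛFin hx hx' ht
  have hFLip (x) (hx : x ∈ Icc a b) (x') (hx' : x' ∈ Icc a b) :=
    integral_abs_sub_le_lipNormOfMod_channelMod_mul hFnn hFprob hXiFin hx hx'
  have hba : 0 < |b - a| := abs_pos.2 (sub_ne_zero.2 hab.ne')
  have hL : 0 ≤ L := nonneg_of_mul_nonneg_left ((abs_nonneg _).trans (hΛLip b hb a ha a ha)) hba
  have hX : 0 ≤ X := nonneg_of_mul_nonneg_left
    ((integral_nonneg fun _ => abs_nonneg _).trans (hFLip b hb a ha)) hba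
  have hΛmax0 : 0 ≤ Λmax := (abs_nonneg _).trans (hΛ a ha a ha)
  have hLipOn : LipschitzOnWith ⟨L + Λmax * X, by positivity⟩ (expectedLoss Λ F g) (Icc a b) :=
    LipschitzOnWith.of_dist_le_mul fun x hx x' hx' =>
      abs_expectedLoss_sub_le hΛmeas hgmeas hgr hΛ hΛLip hFnn hFprob hFLip hx hx'
  calc _ ≤ (L + Λmax * X + Λmax) * betaDist P Phat :=
        abs_integral_sub_le_mul_betaDist_of_lipschitzOnWith_Icc hab.le hPsupp hPhatsupp hLipOn
          (D := ⟨Λmax, hΛmax0⟩) fun x hx => abs_expectedLoss_le hgr hΛ hFnn hFprob hx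
    _ ≤ _ := by
        have : 0 ≤ (b - a) * L * X := mul_nonneg (mul_nonneg (sub_nonneg.2 hab.le) hL) hX
        exact mul_le_mul_of_nonneg_right (by linarith) betaDist_nonneg

/-- Continuity of the expected loss in the input distribution: the
expected losses under two input distributions `P, P̂` differ by at most
`(‖Λ‖_L + Λ_max‖Ξ‖_L + (b−a)‖Λ‖_L‖Ξ‖_L + Λ_max) β(P, P̂)`. -/
theorem expected_loss_beta_continuity
    (a b : ℝ) (hab : a < b)
    -- the channel
    (F : ℝ → ℝ → ℝ)
    (hFmeas : Measurable (Function.uncurry F))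
    (hFnn : ∀ x ∈ Set.Icc a b, ∀ y : ℝ, 0 ≤ F x y)
    (hFprob : ∀ x ∈ Set.Icc a b, ∫ y : ℝ, F x y = 1)
    -- finiteness of the channel Lipschitz norm `‖Ξ‖_L`
    (hXiFin : BddAbove {r : ℝ | ∃ Δ : ℝ, 0 < Δ ∧ Δ < b - a ∧ r = channelMod a b F Δ / Δ})
    -- the loss function, its supremum, and finiteness of its Lipschitz norm `‖Λ‖_L`
    (Λ : ℝ → ℝ → ℝ) (hΛmeas : Measurable (Function.uncurry Λ))
    (hΛnn : ∀ x ∈ Set.Icc a b, ∀ x' ∈ Set.Icc a b, 0 ≤ Λ x x')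
    (Λmax : ℝ)
    (hΛmax : IsLUB (Set.image2 Λ (Set.Icc a b) (Set.Icc a b)) Λmax)
    (hΛFin : BddAbove {r : ℝ | ∃ Δ : ℝ, 0 < Δ ∧ Δ < b - a ∧ r = lossMod a b Λ Δ / Δ})
    -- the denoising rule
    (g : ℝ → ℝ) (hgmeas : Measurable g) (hgr : ∀ y : ℝ, g y ∈ Set.Icc a b)
    -- the two input distributions
    (P Phat : Measure ℝ) [IsProbabilityMeasure P] [IsProbabilityMeasure Phat]
    (hPsupp : P (Set.Icc a b)ᶜ = 0) (hPhatsupp : Phat (Set.Icc a b)ᶜ = 0) :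
    |(∫ x, (∫ y : ℝ, Λ x (g y) * F x y) ∂P)
        - ∫ x, (∫ y : ℝ, Λ x (g y) * F x y) ∂Phat|
      ≤ (lipNormOfMod a b (lossMod a b Λ)
          + Λmax * lipNormOfMod a b (channelMod a b F)
          + (b - a) * lipNormOfMod a b (lossMod a b Λ)
              * lipNormOfMod a b (channelMod a b F)
          + Λmax) * betaDist P Phat :=
  expected_loss_beta_continuity_general a b hab F hFnn hFprob hXiFin Λ hΛmeas hΛnn Λmax hΛmax hΛFin
    g hgmeas hgr P Phat hPsupp hPhatsupp
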